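/- arXiv:2105.02395 — 5 statements merged into one kernel-verified Lean document; each statement's English description precedes it below -/
import Mathlib

section
/- For all real numbers x, y with y > 0 and all reference values x₀ ∈ ℝ, y₀ > 0, the inequality log(1 + x²/y) ≥ -(x₀²/(y₀(y₀ + x₀²)))·(y + x²) + (2/y₀)·x₀·x + log(1 + x₀²/y₀) - x₀²/y₀ holds, with equality when (x, y) = (x₀, y₀). -/
/-!
Two tangent-line minorizations of convex functions are combined. Writing `t = y + x²`, we have
`1 + x²/y = t/y`, and `log u ≥ log u₀ + 1 - u₀/u` (concavity of `log`, i.e. `log s ≤ s - 1` at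
`s = u₀/u`) turns `log (t/y)` into an expression affine in `y/t = 1 - x²/t`. The remaining
quadratic-over-linear term `x²/t` is jointly convex and is bounded below by its tangent plane
at `(x₀, t₀)`, `t₀ = y₀ + x₀²`.
-/

namespace Real

theorem log_add_one_sub_div_le_log {u u₀ : ℝ} (hu : 0 < u) (hu₀ : 0 < u₀) :
    log u₀ + 1 - u₀ / u ≤ log u := by
  have h := log_le_sub_one_of_pos (div_pos hu₀ hu)
  rw [log_div hu₀.ne' hu.ne'] at h
  linarith

end Real

theorem two_mul_mul_sub_sq_mul_le_sq_div (x c t : ℝ) (ht : 0 < t) :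
    2 * c * x - c ^ 2 * t ≤ x ^ 2 / t := by
  have hsq : 0 ≤ (x - c * t) ^ 2 / t := by positivity
  have hid : (x - c * t) ^ 2 / t = x ^ 2 / t - (2 * c * x - c ^ 2 * t) := by
    field_simp
    ring
  linarith

/-- Scalar minorizer of the rate function `log (1 + x²/y)` at a reference
point `(x₀, y₀)`, together with equality at the reference point. -/
theorem stmt_0 (x y x₀ y₀ : ℝ) (hy : 0 < y) (hy₀ : 0 < y₀) :
    (Real.log (1 + x ^ 2 / y) ≥
      -(x₀ ^ 2 / (y₀ * (y₀ + x₀ ^ 2))) * (y + x ^ 2) + (2 / y₀) * x₀ * x +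
        Real.log (1 + x₀ ^ 2 / y₀) - x₀ ^ 2 / y₀) ∧
    (Real.log (1 + x₀ ^ 2 / y₀) =
      -(x₀ ^ 2 / (y₀ * (y₀ + x₀ ^ 2))) * (y₀ + x₀ ^ 2) + (2 / y₀) * x₀ * x₀ +
        Real.log (1 + x₀ ^ 2 / y₀) - x₀ ^ 2 / y₀) := by
  have ht : 0 < y + x ^ 2 := by positivity
  have ht₀ : 0 < y₀ + x₀ ^ 2 := by positivity
  refine ⟨?_, by field_simp; ring⟩
  have hlog := Real.log_add_one_sub_div_le_log
    (show 0 < 1 + x ^ 2 / y by positivity) (show 0 < 1 + x₀ ^ 2 / y₀ by positivity)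
  have htangent := mul_le_mul_of_nonneg_left
    (two_mul_mul_sub_sq_mul_le_sq_div x (x₀ / (y₀ + x₀ ^ 2)) (y + x ^ 2) ht)
    (div_pos ht₀ hy₀).le
  have hratio : 1 - (1 + x₀ ^ 2 / y₀) / (1 + x ^ 2 / y) =
      -(x₀ ^ 2 / y₀) + (y₀ + x₀ ^ 2) / y₀ * (x ^ 2 / (y + x ^ 2)) := by
    field_simp
    ring
  have htangent_eq : (y₀ + x₀ ^ 2) / y₀ *
      (2 * (x₀ / (y₀ + x₀ ^ 2)) * x - (x₀ / (y₀ + x₀ ^ 2)) ^ 2 * (y + x ^ 2)) =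
      -(x₀ ^ 2 / (y₀ * (y₀ + x₀ ^ 2))) * (y + x ^ 2) + (2 / y₀) * x₀ * x := by
    field_simp
    ring
  linarith
end

section
/- For all complex numbers x and real y > 0, and reference values x₀ ∈ ℂ, y₀ > 0: log(1 + |x|²/y) ≥ -(|x₀|²/(y₀(y₀ + |x₀|²)))·(y + |x|²) + (2/y₀)·Re(conj(x₀)·x) + log(1 + |x₀|²/y₀) - |x₀|²/y₀. -/
/-!
Write `s = y + |x|²` and `s₀ = y₀ + |x₀|²`, so that the rate is `log (s / y)`. Concavity of `log`
gives `log (s / y) ≥ log (s₀ / y₀) + 1 - (s₀ / y₀) / (s / y)`, and `y / s = 1 - |x|² / s`, where the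
quadratic-over-linear term `|x|² / s` is bounded below by its tangent at `(x₀, y₀)`, namely by
`2 Re (conj x₀ x) / s₀ - |x₀|² s / s₀²` (Young's inequality). Substituting, the constant terms
collapse because `s₀ / y₀ - 1 = |x₀|² / y₀`.
-/

open Real

lemma Real.log_add_one_sub_div_le_log_s1 {z z₀ : ℝ} (hz : 0 < z) (hz₀ : 0 < z₀) :
    log z₀ + 1 - z₀ / z ≤ log z := by
  have h := one_sub_inv_le_log_of_pos (div_pos hz hz₀)
  rw [log_div hz.ne' hz₀.ne', inv_div] at h
  linarith

lemma two_mul_real_inner_le_norm_sq_div_add {F : Type*} [NormedAddCommGroup F]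
    [InnerProductSpace ℝ F] (v x : F) {s : ℝ} (hs : 0 < s) :
    2 * inner ℝ v x ≤ ‖x‖ ^ 2 / s + s * ‖v‖ ^ 2 := by
  have h : 0 ≤ ‖x - s • v‖ ^ 2 := sq_nonneg _
  rw [norm_sub_sq_real, real_inner_smul_right, norm_smul, mul_pow, Real.norm_of_nonneg hs.le,
    real_inner_comm] at h
  rw [div_add' _ _ _ hs.ne', le_div_iff₀ hs]
  nlinarith

/-- Quadratic minorizer of the complex SINR-rate function `log (1 + |x|²/y)`. -/
theorem stmt_1 (x x₀ : ℂ) (y y₀ : ℝ) (hy : 0 < y) (hy₀ : 0 < y₀) :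
    Real.log (1 + ‖x‖ ^ 2 / y) ≥
      -(‖x₀‖ ^ 2 / (y₀ * (y₀ + ‖x₀‖ ^ 2))) * (y + ‖x‖ ^ 2) +
        (2 / y₀) * ((starRingEnd ℂ) x₀ * x).re +
        Real.log (1 + ‖x₀‖ ^ 2 / y₀) - ‖x₀‖ ^ 2 / y₀ := by
  set s := y + ‖x‖ ^ 2
  set s₀ := y₀ + ‖x₀‖ ^ 2
  have hs : 0 < s := by positivity
  have hs₀ : 0 < s₀ := by positivity
  have hrate : 1 + ‖x‖ ^ 2 / y = s / y := one_add_div hy.ne'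
  have hrate₀ : 1 + ‖x₀‖ ^ 2 / y₀ = s₀ / y₀ := one_add_div hy₀.ne'
  have hconcave := log_add_one_sub_div_le_log_s1 (div_pos hs hy) (div_pos hs₀ hy₀)
  have hyoung := two_mul_real_inner_le_norm_sq_div_add x₀ x (div_pos hs hs₀)
  rw [Complex.inner, mul_comm x] at hyoung
  set c := ((starRingEnd ℂ) x₀ * x).re
  rw [hrate, hrate₀]
  have hgap : 1 - s₀ / y₀ / (s / y) - (-(‖x₀‖ ^ 2 / (y₀ * s₀)) * s + 2 / y₀ * c - ‖x₀‖ ^ 2 / y₀) =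
      (‖x‖ ^ 2 / (s / s₀) + s / s₀ * ‖x₀‖ ^ 2 - 2 * c) / y₀ := by
    field_simp
    simp only [s, s₀]
    ring
  have hslack : 0 ≤ (‖x‖ ^ 2 / (s / s₀) + s / s₀ * ‖x₀‖ ^ 2 - 2 * c) / y₀ :=
    div_nonneg (sub_nonneg.2 hyoung) hy₀.le
  linarith
end

section
/- Let X, X₀ ∈ ℂ^{M×N} and Y, Y₀ ∈ ℂ^{M×M} Hermitian positive definite. Then log det(I + XᴴY⁻¹X) ≥ -tr((Y₀ + X₀X₀ᴴ)⁻¹ X₀ (I + X₀ᴴY₀⁻¹X₀) X₀ᴴ (Y₀ + X₀X₀ᴴ)⁻¹ (Y + XXᴴ)) + 2·Re(tr((I + X₀ᴴY₀⁻¹X₀) X₀ᴴ (Y₀ + X₀X₀ᴴ)⁻¹ X)) + log det(I + X₀ᴴY₀⁻¹X₀) - tr(X₀ᴴY₀⁻¹X₀), with equality at (X, Y) = (X₀, Y₀). -/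
/-!
Put `F = 1 + XᴴY⁻¹X`, `S = Y + XXᴴ`, `W = 1 + X₀ᴴY₀⁻¹X₀` and `V = X₀ᴴ(Y₀ + X₀X₀ᴴ)⁻¹`.
By Woodbury, `F⁻¹ = 1 - XᴴS⁻¹X` is the minimal mean-square error of a linear receiver, so
completing the square gives `F⁻¹ ≤ 1 - VX - XᴴVᴴ + VSVᴴ` in the Loewner order. Applying
`log det A ≤ tr A - n` to `A = W^{1/2} F⁻¹ W^{1/2}` yields
`log det F ≥ log det W - tr (W F⁻¹) + n ≥ log det W - tr (W (1 - VX - XᴴVᴴ + VSVᴴ)) + n`,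
and the right-hand side is the minorizer. At `(X₀, Y₀)`, Woodbury again gives
`W X₀ᴴ(Y₀ + X₀X₀ᴴ)⁻¹X₀ = X₀ᴴY₀⁻¹X₀`, which makes the trace terms cancel.
-/

open Matrix
open scoped ComplexOrder

namespace Matrix

variable {m n : Type*} [Fintype m] [DecidableEq m]

lemma IsHermitian.mul_mul_conjTranspose_sub_mul_inv {S : Matrix m m ℂ} (hS : S.IsHermitian)
    (hSu : IsUnit S) (X : Matrix m n ℂ) (V : Matrix n m ℂ) :
    (V - Xᴴ * S⁻¹) * S * (V - Xᴴ * S⁻¹)ᴴ = V * S * Vᴴ - V * X - Xᴴ * Vᴴ + Xᴴ * S⁻¹ * X := by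
  have := hSu.invertible
  rw [conjTranspose_sub, conjTranspose_mul, hS.inv.eq, conjTranspose_conjTranspose]
  simp only [Matrix.sub_mul, Matrix.mul_sub, Matrix.mul_assoc, mul_inv_cancel_left_of_invertible,
    inv_mul_cancel_left_of_invertible]
  abel

variable [Fintype n] [DecidableEq n]

open scoped MatrixOrder in
lemma PosSemidef.trace_mul_nonneg {𝕜 : Type*} [RCLike 𝕜] {A B : Matrix n n 𝕜}
    (hA : A.PosSemidef) (hB : B.PosSemidef) : 0 ≤ (A * B).trace := by
  set R := CFC.sqrt A
  have hR : R.IsHermitian := (CFC.sqrt_nonneg A).posSemidef.isHermitian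
  have hRR : R * R = A := CFC.sqrt_mul_sqrt_self A hA.nonneg
  have hRBR : (R * B * R).PosSemidef := by
    simpa only [hR.eq] using hB.mul_mul_conjTranspose_same R
  rw [← hRR, Matrix.mul_assoc, trace_mul_comm, Matrix.mul_assoc, ← Matrix.mul_assoc]
  exact hRBR.trace_nonneg

lemma PosDef.log_det_re_le_trace_re_sub_card {A : Matrix n n ℂ} (hA : A.PosDef) :
    Real.log A.det.re ≤ A.trace.re - Fintype.card n := by
  have hdet : A.det.re = ∏ i, hA.1.eigenvalues i := by
    simp [hA.1.det_eq_prod_eigenvalues, ← Complex.ofReal_prod]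
  have htr : A.trace.re = ∑ i, hA.1.eigenvalues i := by
    simp [hA.1.trace_eq_sum_eigenvalues]
  rw [hdet, htr, Real.log_prod fun i _ => (hA.eigenvalues_pos i).ne']
  calc ∑ i, Real.log (hA.1.eigenvalues i)
      ≤ ∑ i, (hA.1.eigenvalues i - 1) :=
        Finset.sum_le_sum fun i _ => Real.log_le_sub_one_of_pos (hA.eigenvalues_pos i)
    _ = ∑ i, hA.1.eigenvalues i - Fintype.card n := by simp [Finset.sum_sub_distrib]

lemma PosDef.det_re_pos {A : Matrix n n ℂ} (hA : A.PosDef) : 0 < A.det.re :=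
  (Complex.pos_iff.mp hA.det_pos).1

lemma PosDef.det_mul_re {A : Matrix n n ℂ} (hA : A.PosDef) (B : Matrix n n ℂ) :
    (A * B).det.re = A.det.re * B.det.re := by
  rw [det_mul, Complex.mul_re, ← (Complex.pos_iff.mp hA.det_pos).2]
  ring

open scoped MatrixOrder in
lemma PosDef.log_det_re_add_log_det_re_le {A B : Matrix n n ℂ} (hA : A.PosDef) (hB : B.PosDef) :
    Real.log A.det.re + Real.log B.det.re ≤ (A * B).trace.re - Fintype.card n := by
  set R := CFC.sqrt A
  have hR : R.IsHermitian := (CFC.sqrt_nonneg A).posSemidef.isHermitian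
  have hRR : R * R = A := CFC.sqrt_mul_sqrt_self A hA.posSemidef.nonneg
  have hRBR : (R * B * R).PosDef := by
    have hRunit : IsUnit R := isUnit_of_mul_isUnit_left (hRR ▸ hA.isUnit)
    simpa only [hR.eq] using hB.mul_mul_conjTranspose_same (vecMul_injective_iff_isUnit.mpr hRunit)
  have hdet : (R * B * R).det.re = A.det.re * B.det.re := by
    rw [← hA.det_mul_re, ← hRR, det_mul, det_mul, det_mul, det_mul, mul_right_comm]
  have htr : (R * B * R).trace = (A * B).trace := by
    rw [← hRR, trace_mul_cycle, Matrix.mul_assoc]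
  rw [← Real.log_mul hA.det_re_pos.ne' hB.det_re_pos.ne', ← hdet, ← htr]
  exact hRBR.log_det_re_le_trace_re_sub_card

lemma PosDef.log_det_re_sub_re_trace_mul_inv_le {W F : Matrix n n ℂ} (hW : W.PosDef)
    (hF : F.PosDef) :
    Real.log W.det.re - (W * F⁻¹).trace.re + Fintype.card n ≤ Real.log F.det.re := by
  have hlog : Real.log F⁻¹.det.re + Real.log F.det.re = 0 := by
    rw [← Real.log_mul hF.inv.det_re_pos.ne' hF.det_re_pos.ne', ← hF.inv.det_mul_re,
      nonsing_inv_mul _ (isUnit_iff_isUnit_det F |>.mp hF.isUnit), det_one, Complex.one_re,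
      Real.log_one]
  linarith [hW.log_det_re_add_log_det_re_le hF.inv]

lemma PosDef.one_add_conjTranspose_mul_inv_mul {Y : Matrix m m ℂ}
    (hY : Y.PosDef) (X : Matrix m n ℂ) : (1 + Xᴴ * Y⁻¹ * X).PosDef :=
  PosDef.one.add_posSemidef (hY.inv.posSemidef.conjTranspose_mul_mul_same X)

lemma inv_one_add_conjTranspose_mul_inv_mul {Y : Matrix m m ℂ} (hY : Y.PosDef)
    (X : Matrix m n ℂ) : (1 + Xᴴ * Y⁻¹ * X)⁻¹ = 1 - Xᴴ * (Y + X * Xᴴ)⁻¹ * X := by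
  have hS : (Y + X * Xᴴ).PosDef := hY.add_posSemidef (posSemidef_self_mul_conjTranspose X)
  have hYinv : Y⁻¹⁻¹ = Y := nonsing_inv_nonsing_inv Y (isUnit_iff_isUnit_det Y |>.mp hY.isUnit)
  have := add_mul_mul_inv_eq_sub 1 Xᴴ Y⁻¹ X isUnit_one hY.inv.isUnit
    (by simpa only [hYinv, inv_one, Matrix.mul_one] using hS.isUnit)
  simpa only [hYinv, inv_one, Matrix.mul_one, Matrix.one_mul] using this

lemma PosSemidef.re_trace_mul_one_sub_le {W : Matrix n n ℂ} (hW : W.PosSemidef)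
    {S : Matrix m m ℂ} (hS : S.PosDef) (X : Matrix m n ℂ) (V : Matrix n m ℂ) :
    (W * (1 - Xᴴ * S⁻¹ * X)).trace.re ≤
      W.trace.re - 2 * (W * V * X).trace.re + (W * V * S * Vᴴ).trace.re := by
  have hsq := hS.isHermitian.mul_mul_conjTranspose_sub_mul_inv hS.isUnit X V
  have hnonneg : 0 ≤ (W * ((V - Xᴴ * S⁻¹) * S * (V - Xᴴ * S⁻¹)ᴴ)).trace.re :=
    (Complex.nonneg_iff.mp (hW.trace_mul_nonneg
      (hS.posSemidef.mul_mul_conjTranspose_same _))).1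
  have hconj : (W * (Xᴴ * Vᴴ)).trace.re = (W * (V * X)).trace.re := by
    rw [← Matrix.mul_assoc, ← hW.isHermitian.eq, ← conjTranspose_mul, ← conjTranspose_mul,
      trace_conjTranspose, Complex.star_def, Complex.conj_re, hW.isHermitian.eq,
      ← Matrix.mul_assoc, trace_mul_comm]
  rw [hsq] at hnonneg
  simp only [Matrix.mul_add, Matrix.mul_sub, Matrix.mul_one, trace_add, trace_sub,
    Complex.add_re, Complex.sub_re, Matrix.mul_assoc] at hnonneg ⊢
  linarith

end Matrix

section Minorizer

variable {m n : Type*} [Fintype m] [DecidableEq m] [Fintype n] [DecidableEq n]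

noncomputable def rateMinorizer (X₀ : Matrix m n ℂ) (Y₀ : Matrix m m ℂ) (X : Matrix m n ℂ)
    (Y : Matrix m m ℂ) : ℝ :=
  -(trace ((Y₀ + X₀ * X₀ᴴ)⁻¹ * X₀ * (1 + X₀ᴴ * Y₀⁻¹ * X₀) * X₀ᴴ *
      (Y₀ + X₀ * X₀ᴴ)⁻¹ * (Y + X * Xᴴ))).re +
    2 * (trace ((1 + X₀ᴴ * Y₀⁻¹ * X₀) * X₀ᴴ * (Y₀ + X₀ * X₀ᴴ)⁻¹ * X)).re +
    Real.log ((1 + X₀ᴴ * Y₀⁻¹ * X₀).det).re - (trace (X₀ᴴ * Y₀⁻¹ * X₀)).re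

theorem rateMinorizer_le_log_det {X₀ : Matrix m n ℂ} {Y₀ : Matrix m m ℂ} (hY₀ : Y₀.PosDef)
    (X : Matrix m n ℂ) {Y : Matrix m m ℂ} (hY : Y.PosDef) :
    rateMinorizer X₀ Y₀ X Y ≤ Real.log ((1 + Xᴴ * Y⁻¹ * X).det).re := by
  set S₀ := Y₀ + X₀ * X₀ᴴ
  set W := 1 + X₀ᴴ * Y₀⁻¹ * X₀
  have hS₀ : S₀.PosDef := hY₀.add_posSemidef (posSemidef_self_mul_conjTranspose X₀)
  have hW : W.PosDef := hY₀.one_add_conjTranspose_mul_inv_mul X₀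
  have hVH : (X₀ᴴ * S₀⁻¹)ᴴ = S₀⁻¹ * X₀ := by
    rw [conjTranspose_mul, hS₀.isHermitian.inv.eq, conjTranspose_conjTranspose]
  have hquad : trace (S₀⁻¹ * X₀ * W * X₀ᴴ * S₀⁻¹ * (Y + X * Xᴴ)) =
      trace (W * (X₀ᴴ * S₀⁻¹) * (Y + X * Xᴴ) * (X₀ᴴ * S₀⁻¹)ᴴ) := by
    rw [hVH, trace_mul_comm _ (S₀⁻¹ * X₀)]
    simp only [Matrix.mul_assoc]
  have hlin : trace (W * X₀ᴴ * S₀⁻¹ * X) = trace (W * (X₀ᴴ * S₀⁻¹) * X) := by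
    simp only [Matrix.mul_assoc]
  have hconst : (trace (X₀ᴴ * Y₀⁻¹ * X₀)).re = W.trace.re - Fintype.card n := by
    simp [W, trace_add]
  have hmse := hW.posSemidef.re_trace_mul_one_sub_le
    (hY.add_posSemidef (posSemidef_self_mul_conjTranspose X)) X (X₀ᴴ * S₀⁻¹)
  rw [← inv_one_add_conjTranspose_mul_inv_mul hY] at hmse
  have hlog := hW.log_det_re_sub_re_trace_mul_inv_le (hY.one_add_conjTranspose_mul_inv_mul X)
  rw [rateMinorizer, hquad, hlin, hconst]
  linarith

theorem rateMinorizer_self {X₀ : Matrix m n ℂ} {Y₀ : Matrix m m ℂ} (hY₀ : Y₀.PosDef) :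
    rateMinorizer X₀ Y₀ X₀ Y₀ = Real.log ((1 + X₀ᴴ * Y₀⁻¹ * X₀).det).re := by
  set S₀ := Y₀ + X₀ * X₀ᴴ
  set W := 1 + X₀ᴴ * Y₀⁻¹ * X₀
  have hS₀ : S₀.PosDef := hY₀.add_posSemidef (posSemidef_self_mul_conjTranspose X₀)
  have hWK : W * (X₀ᴴ * S₀⁻¹ * X₀) = X₀ᴴ * Y₀⁻¹ * X₀ := by
    have h := mul_nonsing_inv W (isUnit_iff_isUnit_det W |>.mp
      (hY₀.one_add_conjTranspose_mul_inv_mul X₀).isUnit)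
    rw [inv_one_add_conjTranspose_mul_inv_mul hY₀, Matrix.mul_sub, Matrix.mul_one] at h
    calc W * (X₀ᴴ * S₀⁻¹ * X₀) = W - (W - W * (X₀ᴴ * S₀⁻¹ * X₀)) := (sub_sub_cancel _ _).symm
      _ = X₀ᴴ * Y₀⁻¹ * X₀ := by rw [h, add_sub_cancel_left]
  have hquad : trace (S₀⁻¹ * X₀ * W * X₀ᴴ * S₀⁻¹ * S₀) = trace (W * (X₀ᴴ * S₀⁻¹ * X₀)) := by
    have := hS₀.isUnit.invertible
    rw [inv_mul_cancel_right_of_invertible, trace_mul_cycle, trace_mul_comm]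
    simp only [Matrix.mul_assoc]
  have hlin : trace (W * X₀ᴴ * S₀⁻¹ * X₀) = trace (W * (X₀ᴴ * S₀⁻¹ * X₀)) := by
    simp only [Matrix.mul_assoc]
  rw [rateMinorizer, hquad, hlin, hWK]
  ring

end Minorizer

/-- Matrix-valued minorizer of the MIMO rate function `log det(I + XᴴY⁻¹X)`,
with equality at the reference point `(X₀, Y₀)`. -/
theorem stmt_8 {M N : ℕ} (X X₀ : Matrix (Fin M) (Fin N) ℂ)
    (Y Y₀ : Matrix (Fin M) (Fin M) ℂ) (hY : Y.PosDef) (hY₀ : Y₀.PosDef) :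
    (Real.log ((1 + Xᴴ * Y⁻¹ * X).det).re ≥
      -(Matrix.trace ((Y₀ + X₀ * X₀ᴴ)⁻¹ * X₀ * (1 + X₀ᴴ * Y₀⁻¹ * X₀) * X₀ᴴ *
          (Y₀ + X₀ * X₀ᴴ)⁻¹ * (Y + X * Xᴴ))).re +
        2 * (Matrix.trace ((1 + X₀ᴴ * Y₀⁻¹ * X₀) * X₀ᴴ * (Y₀ + X₀ * X₀ᴴ)⁻¹ * X)).re +
        Real.log ((1 + X₀ᴴ * Y₀⁻¹ * X₀).det).re -
        (Matrix.trace (X₀ᴴ * Y₀⁻¹ * X₀)).re) ∧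
    (Real.log ((1 + X₀ᴴ * Y₀⁻¹ * X₀).det).re =
      -(Matrix.trace ((Y₀ + X₀ * X₀ᴴ)⁻¹ * X₀ * (1 + X₀ᴴ * Y₀⁻¹ * X₀) * X₀ᴴ *
          (Y₀ + X₀ * X₀ᴴ)⁻¹ * (Y₀ + X₀ * X₀ᴴ))).re +
        2 * (Matrix.trace ((1 + X₀ᴴ * Y₀⁻¹ * X₀) * X₀ᴴ * (Y₀ + X₀ * X₀ᴴ)⁻¹ * X₀)).re +
        Real.log ((1 + X₀ᴴ * Y₀⁻¹ * X₀).det).re -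
        (Matrix.trace (X₀ᴴ * Y₀⁻¹ * X₀)).re) :=
  ⟨rateMinorizer_le_log_det hY₀ X hY, (rateMinorizer_self hY₀).symm⟩
end

section
/- Let Z₁, W₁ ∈ ℂ^{M×N} and Z₂, W₂ ∈ ℂ^{M×M} Hermitian positive definite. Then Z₁ᴴZ₂⁻¹Z₁ ⪰ W₁ᴴW₂⁻¹Z₁ + Z₁ᴴW₂⁻¹W₁ - W₁ᴴW₂⁻¹Z₂W₂⁻¹W₁ in the Loewner order, i.e., the difference is positive semidefinite. -/
open Matrix
open scoped ComplexOrder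

/-! Writing `X = W₂⁻¹W₁`, the difference is `(Z₁ - Z₂X)ᴴ Z₂⁻¹ (Z₁ - Z₂X)`, a congruence of the
positive semidefinite matrix `Z₂⁻¹`. -/

namespace Matrix

variable {m n R : Type*} [Fintype m] [DecidableEq m] [CommRing R] [StarRing R]

theorem conjTranspose_sub_mul_inv_mul_sub {Z : Matrix m m R} (hZ : Z.IsHermitian)
    (hdet : IsUnit Z.det) (A X : Matrix m n R) :
    (A - Z * X)ᴴ * Z⁻¹ * (A - Z * X) = Aᴴ * Z⁻¹ * A - (Xᴴ * A + Aᴴ * X - Xᴴ * Z * X) := by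
  simp only [conjTranspose_sub, conjTranspose_mul, hZ.eq, Matrix.sub_mul, Matrix.mul_sub,
    Matrix.mul_assoc, mul_nonsing_inv_cancel_left _ _ hdet, nonsing_inv_mul_cancel_left _ _ hdet]
  abel

theorem PosSemidef.conjTranspose_mul_inv_mul_sub [Fintype n] [PartialOrder R] {Z : Matrix m m R}
    (hZ : Z.PosSemidef) (hdet : IsUnit Z.det) (A X : Matrix m n R) :
    (Aᴴ * Z⁻¹ * A - (Xᴴ * A + Aᴴ * X - Xᴴ * Z * X)).PosSemidef := by
  rw [← conjTranspose_sub_mul_inv_mul_sub hZ.isHermitian hdet]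
  exact hZ.inv.conjTranspose_mul_mul_same _

end Matrix

/-- Matrix quadratic-over-linear minorization:
`Z₁ᴴZ₂⁻¹Z₁ ⪰ W₁ᴴW₂⁻¹Z₁ + Z₁ᴴW₂⁻¹W₁ - W₁ᴴW₂⁻¹Z₂W₂⁻¹W₁` in the Loewner order. -/
theorem stmt_9 {M N : ℕ} (Z₁ W₁ : Matrix (Fin M) (Fin N) ℂ)
    (Z₂ W₂ : Matrix (Fin M) (Fin M) ℂ) (hZ₂ : Z₂.PosDef) (hW₂ : W₂.PosDef) :
    Matrix.PosSemidef
      (Z₁ᴴ * Z₂⁻¹ * Z₁ -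
        (W₁ᴴ * W₂⁻¹ * Z₁ + Z₁ᴴ * W₂⁻¹ * W₁ - W₁ᴴ * W₂⁻¹ * Z₂ * W₂⁻¹ * W₁)) := by
  have hX : (W₂⁻¹ * W₁)ᴴ = W₁ᴴ * W₂⁻¹ := by
    rw [conjTranspose_mul, conjTranspose_nonsing_inv, hW₂.isHermitian.eq]
  have hdet : IsUnit Z₂.det := (isUnit_iff_isUnit_det Z₂).mp hZ₂.isUnit
  simpa only [hX, Matrix.mul_assoc] using
    hZ₂.posSemidef.conjTranspose_mul_inv_mul_sub hdet Z₁ (W₂⁻¹ * W₁)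
end

section
/- Let R be an N×N Hermitian positive definite matrix, Q ∈ ℂ^{N×K}, and P > 0. Consider minimizing tr(WᴴRW) - 2·Re(tr(WᴴQ)) over W ∈ ℂ^{N×K} with ‖W‖_F² ≤ P. If ‖R⁻¹Q‖_F² ≤ P then W* = R⁻¹Q is optimal; otherwise the optimum is W* = (R + γI)⁻¹Q where γ > 0 is the unique positive solution of ‖(R + γI)⁻¹Q‖_F² = P. -/
/-!
Write `f(W) = Re tr(Wᴴ R W) - 2 Re tr(Wᴴ Q)`. With `S_γ = R + γ I` and `W₀ = S_γ⁻¹ Q`, i.e.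
`Q = R W₀ + γ W₀`, completing the square gives, for `D = W - W₀`,
`f(W) = f(W₀) + Re tr(Dᴴ R D) + γ (‖D‖_F² + ‖W₀‖_F² - ‖W‖_F²)`.
When `γ = 0` or `‖W₀‖_F² = P` (complementary slackness), every `W` in the ball satisfies
`f(W₀) + γ ‖D‖_F² ≤ f(W)`. Applying this to two solutions `γ₁, γ₂ > 0` of `‖S_γ⁻¹ Q‖_F² = P` in
both directions forces `W₁ = W₂`, and then `(γ₁ - γ₂) W₁ = 0` with `W₁ ≠ 0` gives `γ₁ = γ₂`.
-/

open Matrix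
open scoped ComplexOrder

namespace Matrix

lemma add_smul_one_mul_nonsing_inv_cancel_left {m n α : Type*} [Fintype m] [DecidableEq m]
    [CommRing α] {R : Matrix m m α} {c : α} (h : IsUnit (R + c • 1).det) (B : Matrix m n α) :
    R * ((R + c • 1)⁻¹ * B) + c • ((R + c • 1)⁻¹ * B) = B := by
  conv_rhs => rw [← mul_nonsing_inv_cancel_left (R + c • 1) B h]
  rw [Matrix.add_mul, Matrix.smul_mul, Matrix.one_mul]

variable {m n : Type*} [Fintype m] [Fintype n]

lemma re_trace_conjTranspose_mul_comm (A B : Matrix m n ℂ) :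
    (trace (Aᴴ * B)).re = (trace (Bᴴ * A)).re := by
  rw [← conjTranspose_conjTranspose A, ← conjTranspose_mul, trace_conjTranspose,
    conjTranspose_conjTranspose, Complex.star_def, Complex.conj_re]

lemma IsHermitian.re_trace_conjTranspose_mul_mul_comm {M : Matrix m m ℂ} (hM : M.IsHermitian)
    (A B : Matrix m n ℂ) : (trace (Aᴴ * M * B)).re = (trace (Bᴴ * M * A)).re := by
  rw [Matrix.mul_assoc, re_trace_conjTranspose_mul_comm, conjTranspose_mul, hM.eq]

lemma PosSemidef.re_trace_conjTranspose_mul_mul_nonneg {M : Matrix m m ℂ} (hM : M.PosSemidef)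
    (A : Matrix m n ℂ) : 0 ≤ (trace (Aᴴ * M * A)).re :=
  (Complex.nonneg_iff.mp (hM.conjTranspose_mul_mul_same A).trace_nonneg).1

lemma re_trace_conjTranspose_mul_self_nonneg (A : Matrix m n ℂ) : 0 ≤ (trace (Aᴴ * A)).re :=
  (Complex.nonneg_iff.mp (posSemidef_conjTranspose_mul_self A).trace_nonneg).1

lemma re_trace_conjTranspose_mul_self_eq_zero_iff {A : Matrix m n ℂ} :
    (trace (Aᴴ * A)).re = 0 ↔ A = 0 := by
  obtain ⟨-, him⟩ := Complex.nonneg_iff.mp (posSemidef_conjTranspose_mul_self A).trace_nonneg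
  rw [← trace_conjTranspose_mul_self_eq_zero_iff, Complex.ext_iff, ← him]
  simp

end Matrix

section QuadraticObjective

variable {m n : Type*} [Fintype m] [Fintype n]

noncomputable def quadObjective (R : Matrix m m ℂ) (Q W : Matrix m n ℂ) : ℝ :=
  (trace (Wᴴ * R * W)).re - 2 * (trace (Wᴴ * Q)).re

lemma quadObjective_eq_of_stationary {R : Matrix m m ℂ} (hR : R.IsHermitian)
    {Q W₀ : Matrix m n ℂ} {γ : ℝ} (hQ : Q = R * W₀ + (γ : ℂ) • W₀) (W : Matrix m n ℂ) :
    quadObjective R Q W = quadObjective R Q W₀ + (trace ((W - W₀)ᴴ * R * (W - W₀))).re +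
      γ * ((trace ((W - W₀)ᴴ * (W - W₀))).re + (trace (W₀ᴴ * W₀)).re - (trace (Wᴴ * W)).re) := by
  obtain ⟨D, rfl⟩ : ∃ D, W = W₀ + D := ⟨W - W₀, by abel⟩
  have hRcross := hR.re_trace_conjTranspose_mul_mul_comm W₀ D
  have hcross := re_trace_conjTranspose_mul_comm W₀ D
  subst hQ
  simp only [quadObjective, add_sub_cancel_left, conjTranspose_add, Matrix.add_mul, Matrix.mul_add,
    Matrix.mul_smul, ← Matrix.mul_assoc, trace_add, trace_smul, Complex.add_re, smul_eq_mul,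
    Complex.re_ofReal_mul]
  linear_combination hRcross + γ * hcross

lemma quadObjective_add_le_of_stationary {R : Matrix m m ℂ} (hR : R.PosSemidef)
    {Q W₀ : Matrix m n ℂ} {γ P : ℝ} (hγ : 0 ≤ γ) (hQ : Q = R * W₀ + (γ : ℂ) • W₀)
    (hslack : γ = 0 ∨ (trace (W₀ᴴ * W₀)).re = P) {W : Matrix m n ℂ}
    (hW : (trace (Wᴴ * W)).re ≤ P) :
    quadObjective R Q W₀ + γ * (trace ((W - W₀)ᴴ * (W - W₀))).re ≤ quadObjective R Q W := by
  have hnorm : 0 ≤ γ * ((trace (W₀ᴴ * W₀)).re - (trace (Wᴴ * W)).re) := by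
    rcases hslack with rfl | hW₀
    · simp
    · exact mul_nonneg hγ (by linarith)
  rw [quadObjective_eq_of_stationary hR.isHermitian hQ W]
  linarith [hR.re_trace_conjTranspose_mul_mul_nonneg (W - W₀)]

lemma quadObjective_le_of_stationary {R : Matrix m m ℂ} (hR : R.PosSemidef)
    {Q W₀ : Matrix m n ℂ} {γ P : ℝ} (hγ : 0 ≤ γ) (hQ : Q = R * W₀ + (γ : ℂ) • W₀)
    (hslack : γ = 0 ∨ (trace (W₀ᴴ * W₀)).re = P) {W : Matrix m n ℂ}
    (hW : (trace (Wᴴ * W)).re ≤ P) : quadObjective R Q W₀ ≤ quadObjective R Q W :=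
  (le_add_of_nonneg_right (mul_nonneg hγ (re_trace_conjTranspose_mul_self_nonneg _))).trans
    (quadObjective_add_le_of_stationary hR hγ hQ hslack hW)

lemma eq_of_stationary_of_re_trace_eq {R : Matrix m m ℂ} (hR : R.PosSemidef)
    {Q W₁ W₂ : Matrix m n ℂ} {γ₁ γ₂ P : ℝ} (hγ₁ : 0 < γ₁) (hγ₂ : 0 < γ₂)
    (hQ₁ : Q = R * W₁ + (γ₁ : ℂ) • W₁) (hQ₂ : Q = R * W₂ + (γ₂ : ℂ) • W₂)
    (hW₁ : (trace (W₁ᴴ * W₁)).re = P) (hW₂ : (trace (W₂ᴴ * W₂)).re = P) : W₁ = W₂ := by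
  have h₁₂ := quadObjective_add_le_of_stationary hR hγ₁.le hQ₁ (.inr hW₁) hW₂.le
  have h₂₁ := quadObjective_add_le_of_stationary hR hγ₂.le hQ₂ (.inr hW₂) hW₁.le
  rw [← neg_sub W₂ W₁, conjTranspose_neg, Matrix.neg_mul, Matrix.mul_neg, neg_neg] at h₂₁
  have hD := re_trace_conjTranspose_mul_self_nonneg (W₂ - W₁)
  have hD0 : (trace ((W₂ - W₁)ᴴ * (W₂ - W₁))).re = 0 := by nlinarith
  exact (sub_eq_zero.mp (re_trace_conjTranspose_mul_self_eq_zero_iff.mp hD0)).symm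

end QuadraticObjective

/-- KKT characterization of the beamforming subproblem: minimize
`tr(WᴴRW) - 2 Re tr(WᴴQ)` over the Frobenius ball `‖W‖_F² ≤ P`. -/
theorem stmt_11 {N K : ℕ} (R : Matrix (Fin N) (Fin N) ℂ) (hR : R.PosDef)
    (Q : Matrix (Fin N) (Fin K) ℂ) (P : ℝ) (hP : 0 < P) :
    ((Matrix.trace ((R⁻¹ * Q)ᴴ * (R⁻¹ * Q))).re ≤ P →
      ∀ W : Matrix (Fin N) (Fin K) ℂ, (Matrix.trace (Wᴴ * W)).re ≤ P →
        (Matrix.trace ((R⁻¹ * Q)ᴴ * R * (R⁻¹ * Q))).re -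
            2 * (Matrix.trace ((R⁻¹ * Q)ᴴ * Q)).re ≤
          (Matrix.trace (Wᴴ * R * W)).re - 2 * (Matrix.trace (Wᴴ * Q)).re) ∧
    (P < (Matrix.trace ((R⁻¹ * Q)ᴴ * (R⁻¹ * Q))).re →
      ∀ γ : ℝ, 0 < γ →
        (Matrix.trace (((R + (γ : ℂ) • 1)⁻¹ * Q)ᴴ * ((R + (γ : ℂ) • 1)⁻¹ * Q))).re = P →
        ((∀ W : Matrix (Fin N) (Fin K) ℂ, (Matrix.trace (Wᴴ * W)).re ≤ P →
          (Matrix.trace (((R + (γ : ℂ) • 1)⁻¹ * Q)ᴴ * R * ((R + (γ : ℂ) • 1)⁻¹ * Q))).re -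
              2 * (Matrix.trace (((R + (γ : ℂ) • 1)⁻¹ * Q)ᴴ * Q)).re ≤
            (Matrix.trace (Wᴴ * R * W)).re - 2 * (Matrix.trace (Wᴴ * Q)).re) ∧
        (∀ γ' : ℝ, 0 < γ' →
          (Matrix.trace (((R + (γ' : ℂ) • 1)⁻¹ * Q)ᴴ *
            ((R + (γ' : ℂ) • 1)⁻¹ * Q))).re = P → γ' = γ))) := by
  have hstat (γ : ℝ) (hγ : 0 ≤ γ) :
      Q = R * ((R + (γ : ℂ) • 1)⁻¹ * Q) + (γ : ℂ) • ((R + (γ : ℂ) • 1)⁻¹ * Q) :=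
    (add_smul_one_mul_nonsing_inv_cancel_left
      (hR.add_posSemidef (PosSemidef.one.smul (Complex.zero_le_real.mpr hγ))).det_pos.ne'.isUnit
      Q).symm
  refine ⟨fun _ W hW => ?_, fun _ γ hγ hγP => ⟨fun W hW => ?_, fun γ' hγ' hγ'P => ?_⟩⟩
  · have hQ : Q = R * (R⁻¹ * Q) + ((0 : ℝ) : ℂ) • (R⁻¹ * Q) := by simpa using hstat 0 le_rfl
    exact quadObjective_le_of_stationary hR.posSemidef le_rfl hQ (.inl rfl) hW
  · exact quadObjective_le_of_stationary hR.posSemidef hγ.le (hstat γ hγ.le) (.inr hγP) hW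
  · have hW := eq_of_stationary_of_re_trace_eq hR.posSemidef hγ' hγ (hstat γ' hγ'.le)
      (hstat γ hγ.le) hγ'P hγP
    set W := (R + (γ : ℂ) • 1)⁻¹ * Q
    have hW0 : W ≠ 0 := fun h => by simp [h] at hγP; linarith
    have hsmul : (γ' : ℂ) • W = (γ : ℂ) • W := by
      have := (hstat γ' hγ'.le).symm.trans (hstat γ hγ.le)
      rwa [hW, add_right_inj] at this
    exact_mod_cast smul_left_injective ℂ hW0 hsmul
end
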